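/- In DoT addition restricted to one SIMD block of w limbs: let R_i = (A_i + B_i) mod X and g_i = 1 if A_i + B_i ≥ X else 0. Let R'_i = (R_i + d_i) mod X where d_0 = c_in and d_i = g_{i−1} for i ≥ 1 (Phase 3). Then R'_i differs from the true schoolbook sum digit r_i only if there exists t < i with R_t = X − 1 and d_t = 1 (i.e., Phase 3 itself overflowed at some earlier limb); if no such overflow occurs, R'_i = r_i for all i and the block carry-out equals g_{w−1}. -/
import Mathlib


theorem dot_phase3_correct_without_overflow
    (k w : ℕ) (hw : 1 ≤ w) (X : ℕ) (hX : X = 2 ^ k) (hX2 : 2 ≤ X)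
    (cin : ℕ) (hcin : cin = 0 ∨ cin = 1)
    (A B : ℕ → ℕ) (hA : ∀ i < w, A i < X) (hB : ∀ i < w, B i < X)
    (R g d R' r c : ℕ → ℕ)
    (hR : ∀ i, R i = (A i + B i) % X)
    (hg : ∀ i, g i = if A i + B i ≥ X then 1 else 0)
    (hd0 : d 0 = cin) (hd : ∀ i, d (i + 1) = g i)
    (hR' : ∀ i, R' i = (R i + d i) % X)
    (hc0 : c 0 = cin) (hc : ∀ i, c (i + 1) = (A i + B i + c i) / X)
    (hr : ∀ i, r i = (A i + B i + c i) % X) :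
    (∀ i < w, R' i ≠ r i → ∃ t < i, R t = X - 1 ∧ d t = 1) ∧
    ((∀ t < w, ¬(R t = X - 1 ∧ d t = 1)) →
      (∀ i < w, R' i = r i) ∧ c w = g (w - 1)) := by
  have hd1 : ∀ i, d i ≤ 1 := by
    intro i
    cases i with
    | zero => rw [hd0]; omega
    | succ n => rw [hd n, hg n]; split <;> omega
  have key : ∀ i, i ≤ w → (∀ t < i, ¬(R t = X - 1 ∧ d t = 1)) → c i = d i := by
    intro i
    induction i with
    | zero => intro _ _; rw [hc0, hd0]
    | succ n ih =>
      intro hn hno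
      have hcd : c n = d n := ih (by omega) (fun t ht => hno t (by omega))
      have hAn := hA n (by omega)
      have hBn := hB n (by omega)
      have hdn := hd1 n
      rw [hc n, hd n, hg n, hcd]
      by_cases hge : A n + B n ≥ X
      · rw [if_pos hge]
        exact Nat.div_eq_of_lt_le (by omega) (by omega)
      · rw [if_neg hge]
        have hno' := hno n (by omega)
        have hRn : R n = A n + B n := by
          rw [hR n]; exact Nat.mod_eq_of_lt (by omega)
        have : A n + B n + d n < X := by omega
        exact Nat.div_eq_of_lt this
  have heq : ∀ i, i < w → c i = d i → R' i = r i := by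
    intro i hi hcd
    rw [hR' i, hr i, hR i, ← hcd]
    have hciX : c i % X = c i := by
      rw [hcd]; exact Nat.mod_eq_of_lt (by have := hd1 i; omega)
    conv_rhs => rw [Nat.add_mod, hciX]
  constructor
  · intro i hi hne
    by_contra hcon
    push_neg at hcon
    apply hne
    exact heq i hi (key i (le_of_lt hi)
      (fun t ht => by have := hcon t ht; tauto))
  · intro hno
    constructor
    · intro i hi
      exact heq i hi (key i (le_of_lt hi) (fun t ht => hno t (by omega)))
    · have hcw : c w = d w := key w le_rfl (fun t ht => hno t ht)
      have : d w = g (w - 1) := by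
        have h := hd (w - 1)
        rwa [Nat.sub_add_cancel hw] at h
      rw [hcw, this]
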